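/- arXiv:1302.0979 — 2 statements merged into one kernel-verified Lean document; each statement's English description precedes it below -/
import Mathlib

section
/- Let R be a commutative ring, Λ an associative unital R-algebra, and τ : Λ → Λ an R-linear involution. Assume: (a) Λ is τ-smooth, i.e. every x ∈ Λ with τ(x) = x can be written x = z + τ(z) for some z ∈ Λ; and (b) Sym(Λ,τ) is a direct summand of Λ as an R-module. Let C be a commutative R-algebra, let I ⊆ C be an ideal with I² = 0, and let σ := τ ⊗ id denote the induced involution of Λ ⊗_R C. If y is a unit of Λ ⊗_R C such that σ(y)·y − 1 lies in the ideal I·(Λ ⊗_R C), then there exists a unit y' of Λ ⊗_R C with σ(y')·y' = 1 and y' − y ∈ I·(Λ ⊗_R C). -/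
open scoped TensorProduct

/-!
Write `σ = τ ⊗ id` and `J = I·(C ⊗ Λ)`, so that `J² = 0`. The defect `ε = σ(y)y - 1` lies in
`J`, and, being built from norms `σ(a)a` and cross terms `σ(a)b + σ(b)a`, in `Sym(Λ,τ) ⊗ C`.
The base change of a projection of `Λ` onto `Sym(Λ,τ)` fixes `ε`; by smoothness its image lies
in the image of `x ↦ x + σ x`, and since it is `C`-linear it sends `J` into the image of `J`.
This gives `h ∈ J` with `h + σ h = ε`, and `y' = y(1 - h)` works because, modulo `J² = 0`,
`σ(y')y' = (1 - σ h)(1 + ε)(1 - h) = 1 + ε - h - σ h = 1`.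
-/

namespace LinearMap

theorem range_baseChange_le_of_range_le {R C M N P : Type*} [CommSemiring R] [Semiring C]
    [Algebra R C] [AddCommMonoid M] [AddCommMonoid N] [AddCommMonoid P] [Module R M]
    [Module R N] [Module R P] {f : M →ₗ[R] P} {g : N →ₗ[R] P} (h : range f ≤ range g) :
    range (f.baseChange C) ≤ range (g.baseChange C) := by
  rintro _ ⟨x, rfl⟩
  induction x using TensorProduct.induction_on with
  | zero => simp
  | tmul c m =>
    obtain ⟨n, hn⟩ := h ⟨m, rfl⟩
    exact ⟨c ⊗ₜ n, by simp [hn]⟩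
  | add x y hx hy => simpa using add_mem hx hy

theorem baseChange_apply_of_mem_baseChange {R C M : Type*} [CommSemiring R] [Semiring C]
    [Algebra R C] [AddCommMonoid M] [Module R M] {f : M →ₗ[R] M} {p : Submodule R M}
    (hf : ∀ x ∈ p, f x = x) {x : C ⊗[R] M} (hx : x ∈ p.baseChange C) :
    f.baseChange C x = x := by
  rw [Submodule.baseChange_eq_span] at hx
  induction hx using Submodule.span_induction with
  | mem _ hy =>
    obtain ⟨m, hm, rfl⟩ := hy
    simp [hf m hm]
  | zero => simp
  | add _ _ _ _ hx hy => rw [map_add, hx, hy]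
  | smul c _ _ hx => rw [map_smul, hx]

theorem mem_ker_sub_id_iff {R M : Type*} [Semiring R] [AddCommGroup M] [Module R M]
    {τ : M →ₗ[R] M} {x : M} : x ∈ ker (τ - id) ↔ τ x = x := by
  simp [sub_eq_zero]

theorem exists_mem_smul_top_add_baseChange_eq {R C M : Type*} [CommRing R] [Semiring C]
    [Algebra R C] [AddCommGroup M] [Module R M] {τ : M →ₗ[R] M}
    (hsmooth : ker (τ - id) ≤ range (id + τ))
    (hsummand : ∃ q : Submodule R M, IsCompl (ker (τ - id)) q)
    {I : Ideal C} {x : C ⊗[R] M} (hxI : x ∈ I • (⊤ : Submodule C (C ⊗[R] M)))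
    (hxsym : x ∈ (ker (τ - id)).baseChange C) :
    ∃ h ∈ I • (⊤ : Submodule C (C ⊗[R] M)), h + τ.baseChange C h = x := by
  obtain ⟨q, hq⟩ := hsummand
  set π := (ker (τ - id)).projection q hq
  set T := (id + τ).baseChange C
  have hπx : π.baseChange C x = x :=
    baseChange_apply_of_mem_baseChange (fun _ ↦ Submodule.projection_apply_of_mem_left hq) hxsym
  have hrange : range (π.baseChange C) ≤ range T :=
    range_baseChange_le_of_range_le ((Submodule.range_projection hq).trans_le hsmooth)
  have hmem : π.baseChange C x ∈ (I • ⊤ : Submodule C (C ⊗[R] M)).map T := by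
    rw [Submodule.map_smul'', Submodule.map_top]
    refine smul_mono_right I hrange ?_
    rw [← Submodule.map_top, ← Submodule.map_smul'']
    exact Submodule.mem_map_of_mem hxI
  obtain ⟨h, hhI, hh⟩ := hmem
  exact ⟨h, hhI, by simpa [T, baseChange_add, baseChange_id, hπx] using hh⟩

end LinearMap

theorem map_one_of_map_mul_rev_of_involutive {Λ : Type*} [Ring Λ] {τ : Λ → Λ}
    (hτmul : ∀ x y : Λ, τ (x * y) = τ y * τ x) (hτinv : ∀ x : Λ, τ (τ x) = x) : τ 1 = 1 := by
  simpa [hτinv] using (hτmul 1 (τ 1)).symm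

namespace LinearMap

variable {R Λ : Type*} [CommRing R] [Ring Λ] [Algebra R Λ] {τ : Λ →ₗ[R] Λ}
  {C : Type*} [CommRing C] [Algebra R C]

theorem baseChange_mul_of_map_mul_rev (hτmul : ∀ x y : Λ, τ (x * y) = τ y * τ x)
    (a b : C ⊗[R] Λ) : τ.baseChange C (a * b) = τ.baseChange C b * τ.baseChange C a := by
  induction a using TensorProduct.induction_on with
  | zero => simp
  | tmul c l =>
    induction b using TensorProduct.induction_on with
    | zero => simp
    | tmul d m => simp [hτmul, mul_comm c d]
    | add x z hx hz => simp [mul_add, add_mul, hx, hz]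
  | add x z hx hz => simp [mul_add, add_mul, hx, hz]

theorem baseChange_mul_add_mul_mem_baseChange_ker_sub_id
    (hτmul : ∀ x y : Λ, τ (x * y) = τ y * τ x) (hτinv : ∀ x : Λ, τ (τ x) = x)
    (a b : C ⊗[R] Λ) :
    τ.baseChange C a * b + τ.baseChange C b * a ∈ (ker (τ - id)).baseChange C := by
  induction a using TensorProduct.induction_on with
  | zero => simp
  | tmul c l =>
    induction b using TensorProduct.induction_on with
    | zero => simp
    | tmul d m =>
      have hsym : τ (τ l * m + τ m * l) = τ l * m + τ m * l := by
        rw [map_add, hτmul, hτmul, hτinv, hτinv, add_comm]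
      convert Submodule.tmul_mem_baseChange_of_mem (c * d) (mem_ker_sub_id_iff.mpr hsym) using 1
      simp [TensorProduct.tmul_add, mul_comm d c]
    | add u v hu hv =>
      convert add_mem hu hv using 1
      simp only [map_add, mul_add, add_mul]
      abel
  | add u v hu hv =>
    convert add_mem hu hv using 1
    simp only [map_add, mul_add, add_mul]
    abel

theorem baseChange_mul_self_mem_baseChange_ker_sub_id
    (hτmul : ∀ x y : Λ, τ (x * y) = τ y * τ x) (hτinv : ∀ x : Λ, τ (τ x) = x)
    (a : C ⊗[R] Λ) : τ.baseChange C a * a ∈ (ker (τ - id)).baseChange C := by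
  induction a using TensorProduct.induction_on with
  | zero => simp
  | tmul c l =>
    have hsym : τ (τ l * l) = τ l * l := by rw [hτmul, hτinv]
    simpa using Submodule.tmul_mem_baseChange_of_mem (c * c) (mem_ker_sub_id_iff.mpr hsym)
  | add u v hu hv =>
    convert add_mem (add_mem hu hv)
      (baseChange_mul_add_mul_mem_baseChange_ker_sub_id hτmul hτinv u v) using 1
    simp only [map_add, mul_add, add_mul]
    abel

end LinearMap

theorem Submodule.mul_eq_zero_of_mem_smul_top {C A : Type*} [CommSemiring C] [Semiring A]
    [Algebra C A] {I : Ideal C} (hI : I ^ 2 = ⊥) {a b : A} (ha : a ∈ I • (⊤ : Submodule C A))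
    (hb : b ∈ I • (⊤ : Submodule C A)) : a * b = 0 := by
  refine Submodule.smul_induction_on ha (fun r hr n _ ↦ ?_)
    (fun u v hu hv ↦ by rw [add_mul, hu, hv, add_zero])
  refine Submodule.smul_induction_on hb (fun s hs m _ ↦ ?_)
    (fun u v hu hv ↦ by rw [mul_add, hu, hv, add_zero])
  have hrs : r * s = 0 := by
    simpa [hI] using (show r * s ∈ I ^ 2 from sq I ▸ Ideal.mul_mem_mul hr hs)
  rw [smul_mul_smul_comm, hrs, zero_smul]

theorem map_mul_one_sub_mul_eq_one {A F : Type*} [Ring A] [FunLike F A A]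
    [AddMonoidHomClass F A A] {σ : F} (hσmul : ∀ a b : A, σ (a * b) = σ b * σ a)
    (hσ1 : σ 1 = 1) {J : Set A} (hJ : ∀ u ∈ J, ∀ v ∈ J, u * v = 0) (hσJ : ∀ u ∈ J, σ u ∈ J)
    {a h : A} (hε : σ a * a - 1 ∈ J) (hhJ : h ∈ J) (hh : h + σ h = σ a * a - 1) :
    σ (a * (1 - h)) * (a * (1 - h)) = 1 := by
  set ε := σ a * a - 1
  calc σ (a * (1 - h)) * (a * (1 - h)) = (1 - σ h) * ((1 + ε) * (1 - h)) := by
        rw [hσmul, map_sub, hσ1]; simp only [ε]; noncomm_ring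
    _ = 1 + ε - (h + σ h) - ε * h - σ h * ε + σ h * h + σ h * (ε * h) := by noncomm_ring
    _ = 1 := by
        rw [hh, hJ ε hε h hhJ, hJ _ (hσJ h hhJ) ε hε, hJ _ (hσJ h hhJ) h hhJ, mul_zero]
        abel

theorem unit_lifting_along_square_zero_ideal_for_tau_smooth_algebras
    (R : Type) [CommRing R] (Λ : Type) [Ring Λ] [Algebra R Λ]
    -- `τ` is an `R`-linear involution of `Λ`
    (τ : Λ →ₗ[R] Λ)
    (hτmul : ∀ x y : Λ, τ (x * y) = τ y * τ x)
    (hτinv : ∀ x : Λ, τ (τ x) = x)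
    -- (a) `Λ` is `τ`-smooth
    (hsmooth : ∀ x : Λ, τ x = x → ∃ z : Λ, x = z + τ z)
    -- (b) `Sym(Λ,τ)` is a direct summand of `Λ` as an `R`-module
    (hsummand : ∃ q : Submodule R Λ, IsCompl (LinearMap.ker (τ - LinearMap.id)) q)
    (C : Type) [CommRing C] [Algebra R C]
    (I : Ideal C) (hI : I ^ 2 = ⊥)
    (y : (C ⊗[R] Λ)ˣ)
    (hy : (LinearMap.baseChange C τ) (y : C ⊗[R] Λ) * (y : C ⊗[R] Λ) - 1 ∈
      I • (⊤ : Submodule C (C ⊗[R] Λ))) :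
    ∃ y' : (C ⊗[R] Λ)ˣ,
      (LinearMap.baseChange C τ) (y' : C ⊗[R] Λ) * (y' : C ⊗[R] Λ) = 1 ∧
      ((y' : C ⊗[R] Λ) - (y : C ⊗[R] Λ)) ∈ I • (⊤ : Submodule C (C ⊗[R] Λ)) := by
  set σ := τ.baseChange C
  set J : Submodule C (C ⊗[R] Λ) := I • ⊤
  have hJ : ∀ u ∈ J, ∀ v ∈ J, u * v = 0 := fun u hu v hv ↦
    Submodule.mul_eq_zero_of_mem_smul_top hI hu hv
  have hτ1 : τ 1 = 1 := map_one_of_map_mul_rev_of_involutive hτmul hτinv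
  have hσ1 : σ 1 = 1 := by simp [σ, Algebra.TensorProduct.one_def, hτ1]
  have hsym : σ y * y - 1 ∈ (LinearMap.ker (τ - LinearMap.id)).baseChange C :=
    sub_mem (LinearMap.baseChange_mul_self_mem_baseChange_ker_sub_id hτmul hτinv _)
      (Submodule.tmul_mem_baseChange_of_mem 1 (LinearMap.mem_ker_sub_id_iff.mpr hτ1))
  have hsmooth_le : LinearMap.ker (τ - LinearMap.id) ≤ LinearMap.range (LinearMap.id + τ) :=
    fun x hx ↦ (hsmooth x (LinearMap.mem_ker_sub_id_iff.mp hx)).imp fun _ hz ↦ hz.symm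
  obtain ⟨h, hhJ, hh⟩ := LinearMap.exists_mem_smul_top_add_baseChange_eq hsmooth_le hsummand hy hsym
  have hunit : IsUnit (1 - h) := IsNilpotent.isUnit_one_sub ⟨2, by rw [sq]; exact hJ h hhJ h hhJ⟩
  refine ⟨y * hunit.unit, ?_, ?_⟩
  · simpa using map_mul_one_sub_mul_eq_one (LinearMap.baseChange_mul_of_map_mul_rev hτmul) hσ1
      (J := J) hJ (fun u hu ↦ Submodule.smul_top_le_comap_smul_top I σ hu) hy hhJ hh
  · have hdiff : (y : C ⊗[R] Λ) * (1 - h) - y = -(y * h) := by noncomm_ring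
    simpa [hdiff] using
      neg_mem (Submodule.smul_top_le_comap_smul_top I (LinearMap.mulLeft C (y : C ⊗[R] Λ)) hhJ)
end

section
/- Let R be a commutative ring, Λ an associative unital R-algebra, and τ : Λ → Λ an R-linear involution. Let C be a commutative R-algebra, let σ := τ ⊗ id be the induced map on Λ ⊗_R C, and let E_C ⊆ Λ ⊗_R C denote the R-submodule (equivalently C-submodule) generated by all elements e ⊗ c with e ∈ Sym(Λ,τ) and c ∈ C. Then for every y ∈ Λ ⊗_R C and every x ∈ E_C, the element σ(y)·x·y lies in E_C. -/
/-!
Write `σ = τ ⊗ id` and `E` for the span of the symmetric simple tensors. Then `σ` is an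
anti-multiplicative involution fixing `E` pointwise, and every trace `z + σ z` lies in `E`.
For a simple tensor `y = c ⊗ u` one has `σ(y) (d ⊗ e) y = c d c ⊗ τ(u) e u` with `τ(u) e u`
symmetric. Passing from `y₁, y₂` to `y₁ + y₂` only adds the cross terms
`σ(y₁) x y₂ + σ(y₂) x y₁ = w + σ w` with `w = σ(y₁) x y₂`, a trace.
-/

open scoped TensorProduct

theorem map_add_mul_mul_add_mem {A F S : Type*} [Ring A] [FunLike F A A] [AddHomClass F A A]
    [SetLike S A] [AddSubmonoidClass S A] (σ : F) (E : S)
    (hanti : ∀ a b, σ (a * b) = σ b * σ a) (hinv : ∀ a, σ (σ a) = a)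
    (htrace : ∀ z, z + σ z ∈ E) {x y₁ y₂ : A} (hσx : σ x = x)
    (h₁ : σ y₁ * x * y₁ ∈ E) (h₂ : σ y₂ * x * y₂ ∈ E) :
    σ (y₁ + y₂) * x * (y₁ + y₂) ∈ E := by
  have hcross : σ (σ y₁ * x * y₂) = σ y₂ * x * y₁ := by
    rw [hanti, hanti, hσx, hinv, mul_assoc]
  have hexpand : σ (y₁ + y₂) * x * (y₁ + y₂)
      = (σ y₁ * x * y₁ + σ y₂ * x * y₂) + (σ y₁ * x * y₂ + σ (σ y₁ * x * y₂)) := by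
    rw [hcross, map_add, add_mul, add_mul, mul_add, mul_add]
    abel
  rw [hexpand]
  exact add_mem (add_mem h₁ h₂) (htrace _)

section BaseChange

variable {R Λ : Type*} [CommRing R] [Ring Λ] [Algebra R Λ] (C : Type*) [CommRing C] [Algebra R C]

theorem baseChange_mul_rev {τ : Λ →ₗ[R] Λ} (hτmul : ∀ x y, τ (x * y) = τ y * τ x)
    (a b : C ⊗[R] Λ) : τ.baseChange C (a * b) = τ.baseChange C b * τ.baseChange C a := by
  induction a using TensorProduct.induction_on with
  | zero => simp
  | add a₁ a₂ h₁ h₂ => simp only [add_mul, mul_add, map_add, h₁, h₂]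
  | tmul c u =>
    induction b using TensorProduct.induction_on with
    | zero => simp
    | add b₁ b₂ h₁ h₂ => simp only [add_mul, mul_add, map_add, h₁, h₂]
    | tmul d v =>
      simp only [Algebra.TensorProduct.tmul_mul_tmul, LinearMap.baseChange_tmul, hτmul,
        mul_comm c d]

theorem baseChange_baseChange_of_involutive {τ : Λ →ₗ[R] Λ} (hτinv : ∀ x, τ (τ x) = x)
    (z : C ⊗[R] Λ) : τ.baseChange C (τ.baseChange C z) = z := by
  have hττ : τ ∘ₗ τ = LinearMap.id := LinearMap.ext hτinv
  rw [← LinearMap.comp_apply, ← LinearMap.baseChange_comp, hττ, LinearMap.baseChange_id,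
    LinearMap.id_apply]

def symmetricSpan (τ : Λ →ₗ[R] Λ) : Submodule C (C ⊗[R] Λ) :=
  Submodule.span C {z : C ⊗[R] Λ | ∃ (c : C) (e : Λ), τ e = e ∧ z = c ⊗ₜ[R] e}

variable {C}

theorem baseChange_eq_self_of_mem_symmetricSpan {τ : Λ →ₗ[R] Λ} {x : C ⊗[R] Λ}
    (hx : x ∈ symmetricSpan C τ) : τ.baseChange C x = x := by
  suffices symmetricSpan C τ ≤ LinearMap.eqLocus (τ.baseChange C) LinearMap.id from this hx
  refine Submodule.span_le.mpr ?_
  rintro _ ⟨c, e, he, rfl⟩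
  simp [he]

theorem add_baseChange_mem_symmetricSpan {τ : Λ →ₗ[R] Λ} (hτinv : ∀ x, τ (τ x) = x)
    (z : C ⊗[R] Λ) : z + τ.baseChange C z ∈ symmetricSpan C τ := by
  induction z using TensorProduct.induction_on with
  | zero => simp
  | add z₁ z₂ h₁ h₂ =>
    rw [map_add, add_add_add_comm]
    exact add_mem h₁ h₂
  | tmul c u =>
    rw [LinearMap.baseChange_tmul, ← TensorProduct.tmul_add]
    exact Submodule.subset_span ⟨c, u + τ u, by rw [map_add, hτinv, add_comm], rfl⟩

theorem baseChange_tmul_mul_mul_tmul_mem_symmetricSpan {τ : Λ →ₗ[R] Λ}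
    (hτmul : ∀ x y, τ (x * y) = τ y * τ x) (hτinv : ∀ x, τ (τ x) = x) (c : C) (u : Λ)
    {x : C ⊗[R] Λ} (hx : x ∈ symmetricSpan C τ) :
    τ.baseChange C (c ⊗ₜ u) * x * (c ⊗ₜ u) ∈ symmetricSpan C τ := by
  let conj := LinearMap.mulLeftRight C (τ.baseChange C (c ⊗ₜ u), c ⊗ₜ[R] u)
  suffices symmetricSpan C τ ≤ (symmetricSpan C τ).comap conj from this hx
  refine Submodule.span_le.mpr ?_
  rintro _ ⟨d, e, he, rfl⟩
  have hconj : conj (d ⊗ₜ e) = (c * d * c) ⊗ₜ (τ u * e * u) := by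
    simp only [conj, LinearMap.mulLeftRight_apply, LinearMap.baseChange_tmul,
      Algebra.TensorProduct.tmul_mul_tmul]
  refine Submodule.subset_span ⟨c * d * c, τ u * e * u, ?_, hconj⟩
  rw [hτmul, hτmul, hτinv, he, mul_assoc]

end BaseChange

theorem symmetric_part_stable_under_twisted_conjugation
    (R : Type) [CommRing R] (Λ : Type) [Ring Λ] [Algebra R Λ]
    -- `τ` is an `R`-linear involution of `Λ`
    (τ : Λ →ₗ[R] Λ)
    (hτmul : ∀ x y : Λ, τ (x * y) = τ y * τ x)
    (hτinv : ∀ x : Λ, τ (τ x) = x)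
    (C : Type) [CommRing C] [Algebra R C]
    (y x : C ⊗[R] Λ)
    (hx : x ∈ Submodule.span C
      {z : C ⊗[R] Λ | ∃ (c : C) (e : Λ), τ e = e ∧ z = c ⊗ₜ[R] e}) :
    (LinearMap.baseChange C τ) y * x * y ∈ Submodule.span C
      {z : C ⊗[R] Λ | ∃ (c : C) (e : Λ), τ e = e ∧ z = c ⊗ₜ[R] e} := by
  change x ∈ symmetricSpan C τ at hx
  change _ ∈ symmetricSpan C τ
  induction y using TensorProduct.induction_on with
  | zero => simp
  | tmul c u => exact baseChange_tmul_mul_mul_tmul_mem_symmetricSpan hτmul hτinv c u hx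
  | add y₁ y₂ h₁ h₂ =>
    exact map_add_mul_mul_add_mem _ _ (baseChange_mul_rev C hτmul)
      (baseChange_baseChange_of_involutive C hτinv) (add_baseChange_mem_symmetricSpan hτinv)
      (baseChange_eq_self_of_mem_symmetricSpan hx) h₁ h₂
end
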